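/- There exist constants θ_*, θ^*, C_*, h̄ > 0 such that for every integer N ≥ 1 with h = T/N < h̄ and every pair of integers 0 ≤ k ≤ n ≤ N−1 the following hold: (1) if θ_*·h ≤ y^n_k ≤ θ^*/h then k_u(n,k) = k+1, k_d(n,k) = k, y^{n+1}_{k_u(n,k)} = y^n_k + (σ²/4)h + σ√(y^n_k h) and y^{n+1}_{k_d(n,k)} = y^n_k + (σ²/4)h − σ√(y^n_k h); (2) if y^n_k < θ_*·h then k_d(n,k) = k and 0 ≤ y^{n+1}_{k_u(n,k)} − y^n_k ≤ C_*·h; (3) if y^n_k > θ^*/h then k_u(n,k) = k+1; (4) y^{n+1}_{k_u(n,k)} > y^{n+1}_{k_d(n,k)}, the ratio (μ_Y(y^n_k)h + y^n_k − y^{n+1}_{k_d(n,k)}) / (y^{n+1}_{k_u(n,k)} − y^{n+1}_{k_d(n,k)}) lies in [0,1], hence p_u(n,k) equals this ratio and p_d(n,k) = (y^{n+1}_{k_u(n,k)} − y^n_k − μ_Y(y^n_k)h) / (y^{n+1}_{k_u(n,k)} − y^{n+1}_{k_d(n,k)}). -/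

import Mathlib

open MeasureTheory

noncomputable section

open Classical in
/-- The node `y^n_k` of the CIR 'multiple jumps' binomial tree with time step `h`:
`y^n_k = (√Y₀ + (σ/2)(2k-n)√h)²` if `√Y₀ + (σ/2)(2k-n)√h > 0`, and `0` otherwise. -/
def ynode (σ Y0 h : ℝ) (n k : ℕ) : ℝ :=
  if 0 < Real.sqrt Y0 + σ / 2 * (2 * (k : ℝ) - (n : ℝ)) * Real.sqrt h then
    (Real.sqrt Y0 + σ / 2 * (2 * (k : ℝ) - (n : ℝ)) * Real.sqrt h) ^ 2
  else 0

open Classical in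
/-- The 'up' jump index `k_u(n,k)`, with default `n+1` when the set is empty. -/
def kuF (κ θ σ Y0 h : ℝ) (n k : ℕ) : ℕ :=
  if ∃ k' : ℕ, k + 1 ≤ k' ∧ k' ≤ n + 1 ∧
      ynode σ Y0 h n k + κ * (θ - ynode σ Y0 h n k) * h ≤ ynode σ Y0 h (n + 1) k' then
    sInf {k' : ℕ | k + 1 ≤ k' ∧ k' ≤ n + 1 ∧
      ynode σ Y0 h n k + κ * (θ - ynode σ Y0 h n k) * h ≤ ynode σ Y0 h (n + 1) k'}
  else n + 1

open Classical in
/-- The 'down' jump index `k_d(n,k)`, with default `0` when the set is empty. -/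
def kdF (κ θ σ Y0 h : ℝ) (n k : ℕ) : ℕ :=
  if ∃ k' : ℕ, k' ≤ k ∧
      ynode σ Y0 h (n + 1) k' ≤ ynode σ Y0 h n k + κ * (θ - ynode σ Y0 h n k) * h then
    sSup {k' : ℕ | k' ≤ k ∧
      ynode σ Y0 h (n + 1) k' ≤ ynode σ Y0 h n k + κ * (θ - ynode σ Y0 h n k) * h}
  else 0

/-- The 'up' transition probability
`p_u(n,k) = 0 ∨ ((μ_Y(y^n_k)h + y^n_k - y^{n+1}_{k_d})/(y^{n+1}_{k_u} - y^{n+1}_{k_d})) ∧ 1`. -/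
def puF (κ θ σ Y0 h : ℝ) (n k : ℕ) : ℝ :=
  max 0 (min 1 ((κ * (θ - ynode σ Y0 h n k) * h + ynode σ Y0 h n k
      - ynode σ Y0 h (n + 1) (kdF κ θ σ Y0 h n k)) /
    (ynode σ Y0 h (n + 1) (kuF κ θ σ Y0 h n k)
      - ynode σ Y0 h (n + 1) (kdF κ θ σ Y0 h n k))))

/-- The 'down' transition probability `p_d(n,k) = 1 - p_u(n,k)`. -/
def pdF (κ θ σ Y0 h : ℝ) (n k : ℕ) : ℝ := 1 - puF κ θ σ Y0 h n k


/-!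
Write `y^n_k = max(x^n_k, 0)²` with `x^n_k = √Y₀ + (σ/2)(2k-n)√h`; the neighbours of `(n, k)` at
time `n + 1` then have square roots `x^n_k ± σ√h/2`, and moving one index up at a fixed time adds
`σ√h`. Expanding `(x ± σ√h/2)²` shows that for `θ_* h ≤ y ≤ θ^*/h` the Euler step `y + κ(θ - y)h`
lies between the two neighbours, so the jumps go to `k` and `k + 1`. For small `y` the up node is
the first node above the Euler step, hence at most one grid step `σ√h` (in square-root scale) above
it, which is `O(h)`; for large `y` the Euler step is below `y`, hence below the upper neighbour.
For small `h` the Euler step is positive and lies between `y^{n+1}_0 ≤ Y₀` (when `y` is large) and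
`y^{n+1}_{n+1} ≥ Y₀` (when `y` is small), so both index sets are nonempty and `p_u` is the
unclipped ratio.
-/

def xnode (σ Y0 h : ℝ) (n k : ℕ) : ℝ :=
  √Y0 + σ / 2 * (2 * (k : ℝ) - (n : ℝ)) * √h

/-- `y + μ_Y(y) h`, the mean that the one-step transition of the tree has to match. -/
def eulerStep (κ θ h y : ℝ) : ℝ := y + κ * (θ - y) * h

section Nodes

variable {σ Y0 h : ℝ} {n k : ℕ}

lemma ynode_eq_max_sq : ynode σ Y0 h n k = max (xnode σ Y0 h n k) 0 ^ 2 := by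
  unfold ynode xnode
  split_ifs with hx
  · rw [max_eq_left hx.le]
  · rw [max_eq_right (not_lt.1 hx)]; ring

lemma ynode_nonneg : 0 ≤ ynode σ Y0 h n k := by
  rw [ynode_eq_max_sq]; positivity

lemma ynode_eq_sq (hx : 0 ≤ xnode σ Y0 h n k) : ynode σ Y0 h n k = xnode σ Y0 h n k ^ 2 := by
  rw [ynode_eq_max_sq, max_eq_left hx]

lemma xnode_pos_of_ynode_pos (hy : 0 < ynode σ Y0 h n k) : 0 < xnode σ Y0 h n k := by
  by_contra! hx
  rw [ynode_eq_max_sq, max_eq_right hx] at hy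
  simp at hy

lemma xnode_succ_succ : xnode σ Y0 h (n + 1) (k + 1) = xnode σ Y0 h n k + σ / 2 * √h := by
  unfold xnode; push_cast; ring

lemma xnode_succ_self : xnode σ Y0 h (n + 1) k = xnode σ Y0 h n k - σ / 2 * √h := by
  unfold xnode; push_cast; ring

lemma xnode_add_one : xnode σ Y0 h n (k + 1) = xnode σ Y0 h n k + σ * √h := by
  unfold xnode; push_cast; ring

lemma xnode_mono (hσ : 0 ≤ σ) : Monotone (xnode σ Y0 h n) :=
  monotone_nat_of_le_succ fun k => by
    rw [xnode_add_one]; exact le_add_of_nonneg_right (by positivity)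

lemma ynode_mono (hσ : 0 ≤ σ) : Monotone (ynode σ Y0 h n) := fun j j' hj => by
  simp only [ynode_eq_max_sq]
  exact pow_le_pow_left₀ (le_max_right _ _) (max_le_max_right 0 (xnode_mono hσ hj)) 2

lemma ynode_lt_ynode (hσ : 0 < σ) (hh : 0 < h) {j j' : ℕ} (hj : j < j')
    (hpos : 0 < ynode σ Y0 h n j') : ynode σ Y0 h n j < ynode σ Y0 h n j' := by
  have hx' := xnode_pos_of_ynode_pos hpos
  have hlt : xnode σ Y0 h n j < xnode σ Y0 h n j' :=
    calc xnode σ Y0 h n j < xnode σ Y0 h n (j + 1) := by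
          rw [xnode_add_one]; exact lt_add_of_pos_right _ (by positivity)
      _ ≤ xnode σ Y0 h n j' := xnode_mono hσ.le hj
  rw [ynode_eq_max_sq (k := j), ynode_eq_sq hx'.le]
  exact pow_lt_pow_left₀ (max_lt hlt hx') (le_max_right _ _) two_ne_zero

lemma ynode_le_ynode_succ_succ (hσ : 0 ≤ σ) :
    ynode σ Y0 h n k ≤ ynode σ Y0 h (n + 1) (k + 1) := by
  simp only [ynode_eq_max_sq, xnode_succ_succ]
  exact pow_le_pow_left₀ (le_max_right _ _)
    (max_le_max_right 0 (le_add_of_nonneg_right (by positivity))) 2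

lemma ynode_le_Y0 (hσ : 0 ≤ σ) (hY0 : 0 ≤ Y0) (hk : 2 * k ≤ n) : ynode σ Y0 h n k ≤ Y0 := by
  have hkn : 2 * (k : ℝ) - n ≤ 0 := by rw [sub_nonpos]; exact_mod_cast hk
  have hx : xnode σ Y0 h n k ≤ √Y0 := by
    unfold xnode
    have : σ / 2 * (2 * (k : ℝ) - n) * √h ≤ 0 :=
      mul_nonpos_of_nonpos_of_nonneg (mul_nonpos_of_nonneg_of_nonpos (by positivity) hkn)
        (Real.sqrt_nonneg h)
    linarith
  calc ynode σ Y0 h n k = max (xnode σ Y0 h n k) 0 ^ 2 := ynode_eq_max_sq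
    _ ≤ √Y0 ^ 2 := pow_le_pow_left₀ (le_max_right _ _) (max_le hx (Real.sqrt_nonneg _)) 2
    _ = Y0 := Real.sq_sqrt hY0

lemma Y0_le_ynode (hσ : 0 ≤ σ) (hY0 : 0 ≤ Y0) (hk : n ≤ 2 * k) : Y0 ≤ ynode σ Y0 h n k := by
  have hkn : 0 ≤ 2 * (k : ℝ) - n := by rw [sub_nonneg]; exact_mod_cast hk
  have hx : √Y0 ≤ xnode σ Y0 h n k := by
    unfold xnode
    have : 0 ≤ σ / 2 * (2 * (k : ℝ) - n) * √h := by positivity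
    linarith
  calc Y0 = √Y0 ^ 2 := (Real.sq_sqrt hY0).symm
    _ ≤ xnode σ Y0 h n k ^ 2 := pow_le_pow_left₀ (Real.sqrt_nonneg _) hx 2
    _ = ynode σ Y0 h n k := (ynode_eq_sq ((Real.sqrt_nonneg _).trans hx)).symm

lemma ynode_succ_succ (hσ : 0 ≤ σ) (hh : 0 ≤ h) (hy : 0 < ynode σ Y0 h n k) :
    ynode σ Y0 h (n + 1) (k + 1)
      = ynode σ Y0 h n k + σ ^ 2 / 4 * h + σ * √(ynode σ Y0 h n k * h) := by
  have hx := xnode_pos_of_ynode_pos hy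
  have hyx := ynode_eq_sq hx.le
  have hr : √(ynode σ Y0 h n k * h) = xnode σ Y0 h n k * √h := by
    rw [hyx, Real.sqrt_mul (sq_nonneg _), Real.sqrt_sq hx.le]
  rw [ynode_eq_sq (by rw [xnode_succ_succ]; positivity), xnode_succ_succ, hr, hyx]
  linear_combination (σ ^ 2 / 4) * Real.sq_sqrt hh

lemma ynode_succ_self (hσ : 0 < σ) (hh : 0 < h) (hy : σ ^ 2 / 4 * h ≤ ynode σ Y0 h n k) :
    ynode σ Y0 h (n + 1) k
      = ynode σ Y0 h n k + σ ^ 2 / 4 * h - σ * √(ynode σ Y0 h n k * h) := by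
  have hx := xnode_pos_of_ynode_pos (lt_of_lt_of_le (by positivity) hy)
  have hyx := ynode_eq_sq hx.le
  have hs := Real.sq_sqrt hh.le
  have hr : √(ynode σ Y0 h n k * h) = xnode σ Y0 h n k * √h := by
    rw [hyx, Real.sqrt_mul (sq_nonneg _), Real.sqrt_sq hx.le]
  have hhalf : σ / 2 * √h ≤ xnode σ Y0 h n k := by
    rw [← pow_le_pow_iff_left₀ (by positivity) hx.le two_ne_zero, ← hyx]
    linear_combination hy + (σ ^ 2 / 4) * hs
  rw [ynode_eq_sq (by rw [xnode_succ_self]; linarith), xnode_succ_self, hr, hyx]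
  linear_combination (σ ^ 2 / 4) * hs

lemma ynode_succ_self_eq_zero (hσ : 0 ≤ σ) (hh : 0 ≤ h) (hy : ynode σ Y0 h n k < σ ^ 2 / 4 * h) :
    ynode σ Y0 h (n + 1) k = 0 := by
  suffices hx : xnode σ Y0 h n k - σ / 2 * √h ≤ 0 by
    rw [ynode_eq_max_sq, xnode_succ_self, max_eq_right hx]; ring
  by_contra! hx
  have hsq : (σ / 2 * √h) ^ 2 < xnode σ Y0 h n k ^ 2 :=
    pow_lt_pow_left₀ (by linarith) (by positivity) two_ne_zero
  rw [← ynode_eq_sq (by nlinarith [Real.sqrt_nonneg h]), mul_pow, Real.sq_sqrt hh] at hsq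
  linarith

end Nodes

section Indices

variable {κ θ σ Y0 h : ℝ} {n k j : ℕ}

lemma kuF_le_succ : kuF κ θ σ Y0 h n k ≤ n + 1 := by
  unfold kuF
  split_ifs with hne
  · exact (Nat.sInf_mem hne).2.1
  · exact le_rfl

lemma kuF_le (hj : k + 1 ≤ j) (hjn : j ≤ n + 1)
    (hv : eulerStep κ θ h (ynode σ Y0 h n k) ≤ ynode σ Y0 h (n + 1) j) :
    kuF κ θ σ Y0 h n k ≤ j := by
  unfold kuF
  rw [if_pos ⟨j, hj, hjn, hv⟩]
  exact Nat.sInf_le ⟨hj, hjn, hv⟩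

lemma kuF_spec
    (hne : ∃ j, k + 1 ≤ j ∧ j ≤ n + 1 ∧
      eulerStep κ θ h (ynode σ Y0 h n k) ≤ ynode σ Y0 h (n + 1) j) :
    k + 1 ≤ kuF κ θ σ Y0 h n k ∧
      eulerStep κ θ h (ynode σ Y0 h n k) ≤ ynode σ Y0 h (n + 1) (kuF κ θ σ Y0 h n k) := by
  unfold kuF
  unfold eulerStep at hne
  rw [if_pos hne]
  exact ⟨(Nat.sInf_mem hne).1, (Nat.sInf_mem hne).2.2⟩

lemma ynode_lt_eulerStep_of_lt_kuF (hj : k + 1 ≤ j) (hjk : j < kuF κ θ σ Y0 h n k) :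
    ynode σ Y0 h (n + 1) j < eulerStep κ θ h (ynode σ Y0 h n k) := by
  by_contra! hv
  have := kuF_le hj (hjk.le.trans kuF_le_succ) hv
  omega

lemma kuF_eq_succ (hkn : k ≤ n)
    (hv : eulerStep κ θ h (ynode σ Y0 h n k) ≤ ynode σ Y0 h (n + 1) (k + 1)) :
    kuF κ θ σ Y0 h n k = k + 1 :=
  le_antisymm (kuF_le le_rfl (by omega) hv) (kuF_spec ⟨k + 1, le_rfl, by omega, hv⟩).1

lemma kdF_le_self : kdF κ θ σ Y0 h n k ≤ k := by
  unfold kdF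
  split_ifs with hne
  · exact (Nat.sSup_mem hne ⟨k, fun _ hj => hj.1⟩).1
  · exact Nat.zero_le k

lemma ynode_kdF_le
    (hne : ∃ j ≤ k, ynode σ Y0 h (n + 1) j ≤ eulerStep κ θ h (ynode σ Y0 h n k)) :
    ynode σ Y0 h (n + 1) (kdF κ θ σ Y0 h n k) ≤ eulerStep κ θ h (ynode σ Y0 h n k) := by
  unfold kdF
  unfold eulerStep at hne
  rw [if_pos hne]
  exact (Nat.sSup_mem hne ⟨k, fun _ hj => hj.1⟩).2

lemma kdF_eq_self (hv : ynode σ Y0 h (n + 1) k ≤ eulerStep κ θ h (ynode σ Y0 h n k)) :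
    kdF κ θ σ Y0 h n k = k := by
  refine le_antisymm kdF_le_self ?_
  unfold kdF
  rw [if_pos ⟨k, le_rfl, hv⟩]
  exact le_csSup ⟨k, fun _ hj => hj.1⟩ ⟨le_rfl, hv⟩

lemma sq_max_add_le_sq_sqrt_add {a c d v : ℝ} (hav : max a 0 ^ 2 ≤ v) (hc : 0 ≤ c)
    (hcd : c ≤ d) : max (a + c) 0 ^ 2 ≤ (√v + d) ^ 2 := by
  have ha : max a 0 ≤ √v := (Real.le_sqrt (le_max_right _ _) ((sq_nonneg _).trans hav)).2 hav
  refine pow_le_pow_left₀ (le_max_right _ _) (max_le ?_ (by linarith [Real.sqrt_nonneg v])) 2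
  linarith [le_max_left a 0]

/-- The node just below the up node is either `y^n_k` itself or lies below the Euler step. -/
lemma ynode_kuF_le (hσ : 0 ≤ σ)
    (hne : ∃ j, k + 1 ≤ j ∧ j ≤ n + 1 ∧
      eulerStep κ θ h (ynode σ Y0 h n k) ≤ ynode σ Y0 h (n + 1) j)
    (hyv : ynode σ Y0 h n k ≤ eulerStep κ θ h (ynode σ Y0 h n k)) :
    ynode σ Y0 h (n + 1) (kuF κ θ σ Y0 h n k)
      ≤ (√(eulerStep κ θ h (ynode σ Y0 h n k)) + σ * √h) ^ 2 := by
  obtain ⟨hku, -⟩ := kuF_spec hne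
  obtain ⟨m, hm⟩ : ∃ m, kuF κ θ σ Y0 h n k = m + 1 := ⟨kuF κ θ σ Y0 h n k - 1, by omega⟩
  have hstep : σ / 2 * √h ≤ σ * √h :=
    mul_le_mul_of_nonneg_right (half_le_self hσ) (Real.sqrt_nonneg h)
  rw [hm, ynode_eq_max_sq]
  rcases (show m = k ∨ k + 1 ≤ m by omega) with rfl | hkm
  · rw [xnode_succ_succ]
    exact sq_max_add_le_sq_sqrt_add (ynode_eq_max_sq ▸ hyv) (by positivity) hstep
  · rw [xnode_add_one]
    have hbelow :=
      (ynode_lt_eulerStep_of_lt_kuF hkm (show m < kuF κ θ σ Y0 h n k by omega)).le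
    exact sq_max_add_le_sq_sqrt_add (ynode_eq_max_sq ▸ hbelow) (by positivity) le_rfl

end Indices

section EulerStep

variable {κ θ σ h y : ℝ}

lemma eulerStep_pos (hκ : 0 < κ) (hθ : 0 < θ) (hh : 0 < h) (hκh : κ * h ≤ 1) (hy : 0 ≤ y) :
    0 < eulerStep κ θ h y := by
  unfold eulerStep
  nlinarith [mul_nonneg hy (sub_nonneg.2 hκh), mul_pos (mul_pos hκ hθ) hh]

lemma le_eulerStep (hκ : 0 ≤ κ) (hh : 0 ≤ h) (hy : y ≤ θ) : y ≤ eulerStep κ θ h y := by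
  unfold eulerStep
  nlinarith [mul_nonneg (mul_nonneg hκ (sub_nonneg.2 hy)) hh]

lemma eulerStep_le_self (hκ : 0 ≤ κ) (hh : 0 ≤ h) (hy : θ ≤ y) : eulerStep κ θ h y ≤ y := by
  unfold eulerStep
  nlinarith [mul_nonneg (mul_nonneg hκ (sub_nonneg.2 hy)) hh]

lemma eulerStep_le_add (hκ : 0 ≤ κ) (hh : 0 ≤ h) (hy : 0 ≤ y) :
    eulerStep κ θ h y ≤ y + κ * θ * h := by
  unfold eulerStep
  nlinarith [mul_nonneg (mul_nonneg hκ hy) hh]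

lemma half_le_eulerStep (hκ : 0 ≤ κ) (hθ : 0 ≤ θ) (hh : 0 ≤ h) (hκh : κ * h ≤ 1 / 2)
    (hy : 0 ≤ y) : y / 2 ≤ eulerStep κ θ h y := by
  unfold eulerStep
  nlinarith [mul_nonneg hy (by linarith : (0 : ℝ) ≤ 1 / 2 - κ * h),
    mul_nonneg (mul_nonneg hκ hθ) hh]

lemma eulerStep_le_up_jump (hκ : 0 ≤ κ) (hθ : 0 ≤ θ) (hσ : 0 < σ) (hh : 0 ≤ h)
    (hy : (κ * θ / σ) ^ 2 * h ≤ y) :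
    eulerStep κ θ h y ≤ y + σ ^ 2 / 4 * h + σ * √(y * h) := by
  have hy0 : 0 ≤ y := le_trans (by positivity) hy
  have hdrift : κ * θ * h ≤ σ * √(y * h) := by
    rw [← pow_le_pow_iff_left₀ (by positivity) (by positivity) two_ne_zero, mul_pow σ,
      Real.sq_sqrt (by positivity)]
    calc (κ * θ * h) ^ 2 = σ ^ 2 * ((κ * θ / σ) ^ 2 * h) * h := by field_simp
      _ ≤ σ ^ 2 * y * h := by gcongr
      _ = σ ^ 2 * (y * h) := by ring
  unfold eulerStep
  nlinarith [mul_nonneg (mul_nonneg hκ hy0) hh, mul_nonneg (sq_nonneg σ) hh]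

end EulerStep

/-- `θ_*`: above `θ_* h` the down node is `(√y - σ√h/2)²` and the up node reaches the Euler step. -/
def thetaLow (κ θ σ : ℝ) : ℝ := σ ^ 2 / 4 + (κ * θ / σ) ^ 2

/-- `θ^*`: below `θ^*/h` the mean reversion `κ y h` stays under half the down jump `σ√(yh)`. -/
def thetaHigh (κ σ : ℝ) : ℝ := σ ^ 2 / (4 * κ ^ 2)

/-- `C_*` bounds `(√v + σ√h)² - y` when `v ≤ y + κθh` and `v ≤ (θ_* + κθ) h`. -/
def cStar (κ θ σ : ℝ) : ℝ := κ * θ + 2 * σ * √(thetaLow κ θ σ + κ * θ) + σ ^ 2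

def hBar (κ θ σ Y0 : ℝ) : ℝ :=
  min (1 / (2 * κ)) (min (θ / thetaLow κ θ σ)
    (min (thetaHigh κ σ / (θ + 2 * Y0)) (Y0 / (thetaLow κ θ σ + κ * θ))))

structure SmallStep (κ θ σ Y0 h : ℝ) : Prop where
  pos : 0 < h
  kappa_mul_le : κ * h ≤ 1 / 2
  thetaLow_mul_lt : thetaLow κ θ σ * h < θ
  add_mul_lt_thetaHigh : (θ + 2 * Y0) * h < thetaHigh κ σ
  add_mul_lt_Y0 : (thetaLow κ θ σ + κ * θ) * h < Y0

lemma down_jump_le_eulerStep {κ θ σ h y : ℝ} (hκ : 0 < κ) (hθ : 0 ≤ θ) (hσ : 0 < σ)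
    (hh : 0 < h) (hy₀ : σ ^ 2 / 4 * h ≤ y) (hy : y ≤ thetaHigh κ σ / h) :
    y + σ ^ 2 / 4 * h - σ * √(y * h) ≤ eulerStep κ θ h y := by
  have hyh : y * h ≤ σ ^ 2 / (4 * κ ^ 2) := (le_div_iff₀ hh).1 hy
  have hy0 : 0 ≤ y := le_trans (by positivity) hy₀
  have hr := Real.sq_sqrt (by positivity : 0 ≤ y * h)
  have hr0 := Real.sqrt_nonneg (y * h)
  have hmean : κ * y * h ≤ σ / 2 * √(y * h) := by
    rw [← pow_le_pow_iff_left₀ (by nlinarith) (by positivity) two_ne_zero]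
    have : κ ^ 2 * (y * h) ≤ σ ^ 2 / 4 := by
      calc κ ^ 2 * (y * h) ≤ κ ^ 2 * (σ ^ 2 / (4 * κ ^ 2)) := by gcongr
        _ = σ ^ 2 / 4 := by field_simp
    nlinarith
  have hvar : σ ^ 2 / 4 * h ≤ σ / 2 * √(y * h) := by
    have : σ / 2 * h ≤ √(y * h) := by
      rw [← pow_le_pow_iff_left₀ (by positivity) hr0 two_ne_zero, hr]
      nlinarith
    nlinarith
  unfold eulerStep
  nlinarith [mul_nonneg (mul_nonneg hκ.le hθ) hh.le]

section SmallStep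

variable {κ θ σ Y0 h : ℝ} {n k : ℕ}

lemma thetaLow_pos (hκ : 0 < κ) (hθ : 0 < θ) (hσ : 0 < σ) : 0 < thetaLow κ θ σ := by
  unfold thetaLow; positivity

lemma hBar_pos (hκ : 0 < κ) (hθ : 0 < θ) (hσ : 0 < σ) (hY0 : 0 < Y0) : 0 < hBar κ θ σ Y0 := by
  have := thetaLow_pos hκ hθ hσ
  unfold hBar thetaHigh
  positivity

lemma smallStep_of_lt_hBar (hκ : 0 < κ) (hθ : 0 < θ) (hσ : 0 < σ) (hY0 : 0 < Y0) (hh : 0 < h)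
    (hlt : h < hBar κ θ σ Y0) : SmallStep κ θ σ Y0 h := by
  have hL := thetaLow_pos hκ hθ hσ
  simp only [hBar, lt_min_iff] at hlt
  obtain ⟨h1, h2, h3, h4⟩ := hlt
  rw [lt_div_iff₀ (by positivity)] at h1 h2 h3 h4
  exact ⟨hh, by linarith, by linarith, by linarith, by linarith⟩

lemma eulerStep_ynode_pos (hκ : 0 < κ) (hθ : 0 < θ) (hs : SmallStep κ θ σ Y0 h) :
    0 < eulerStep κ θ h (ynode σ Y0 h n k) :=
  eulerStep_pos hκ hθ hs.pos (by linarith [hs.kappa_mul_le]) ynode_nonneg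

lemma ynode_succ_self_le_eulerStep (hκ : 0 < κ) (hθ : 0 < θ) (hσ : 0 < σ)
    (hs : SmallStep κ θ σ Y0 h) (hy : ynode σ Y0 h n k ≤ thetaHigh κ σ / h) :
    ynode σ Y0 h (n + 1) k ≤ eulerStep κ θ h (ynode σ Y0 h n k) := by
  rcases le_or_gt (σ ^ 2 / 4 * h) (ynode σ Y0 h n k) with hy₀ | hy₀
  · rw [ynode_succ_self hσ hs.pos hy₀]
    exact down_jump_le_eulerStep hκ hθ.le hσ hs.pos hy₀ hy
  · rw [ynode_succ_self_eq_zero hσ.le hs.pos.le hy₀]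
    exact (eulerStep_ynode_pos hκ hθ hs).le

lemma exists_ynode_succ_le_eulerStep (hκ : 0 < κ) (hθ : 0 < θ) (hσ : 0 < σ) (hY0 : 0 < Y0)
    (hs : SmallStep κ θ σ Y0 h) :
    ∃ j ≤ k, ynode σ Y0 h (n + 1) j ≤ eulerStep κ θ h (ynode σ Y0 h n k) := by
  rcases le_or_gt (ynode σ Y0 h n k) (thetaHigh κ σ / h) with hy | hy
  · exact ⟨k, le_rfl, ynode_succ_self_le_eulerStep hκ hθ hσ hs hy⟩
  · refine ⟨0, Nat.zero_le k, ?_⟩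
    have h2Y0 : 2 * Y0 < thetaHigh κ σ / h := by
      rw [lt_div_iff₀ hs.pos]
      nlinarith [hs.add_mul_lt_thetaHigh, mul_pos hθ hs.pos]
    calc ynode σ Y0 h (n + 1) 0 ≤ Y0 := ynode_le_Y0 hσ.le hY0.le (by omega)
      _ ≤ ynode σ Y0 h n k / 2 := by linarith
      _ ≤ eulerStep κ θ h (ynode σ Y0 h n k) :=
        half_le_eulerStep hκ.le hθ.le hs.pos.le hs.kappa_mul_le ynode_nonneg

lemma eulerStep_le_ynode_succ_succ (hκ : 0 < κ) (hθ : 0 < θ) (hσ : 0 < σ) (hh : 0 < h)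
    (hy : thetaLow κ θ σ * h ≤ ynode σ Y0 h n k) :
    eulerStep κ θ h (ynode σ Y0 h n k) ≤ ynode σ Y0 h (n + 1) (k + 1) := by
  have hlow : (κ * θ / σ) ^ 2 * h ≤ ynode σ Y0 h n k :=
    le_trans (by unfold thetaLow; nlinarith [mul_nonneg (sq_nonneg σ) hh.le]) hy
  have hpos : 0 < ynode σ Y0 h n k := lt_of_lt_of_le (by positivity) hlow
  rw [ynode_succ_succ hσ.le hh.le hpos]
  exact eulerStep_le_up_jump hκ.le hθ.le hσ hh.le hlow

lemma exists_eulerStep_le_ynode_succ (hκ : 0 < κ) (hθ : 0 < θ) (hσ : 0 < σ) (hY0 : 0 < Y0)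
    (hs : SmallStep κ θ σ Y0 h) (hkn : k ≤ n) :
    ∃ j, k + 1 ≤ j ∧ j ≤ n + 1 ∧
      eulerStep κ θ h (ynode σ Y0 h n k) ≤ ynode σ Y0 h (n + 1) j := by
  refine ⟨n + 1, by omega, le_rfl, ?_⟩
  rcases le_or_gt (thetaLow κ θ σ * h) (ynode σ Y0 h n k) with hy | hy
  · exact (eulerStep_le_ynode_succ_succ hκ hθ hσ hs.pos hy).trans
      (ynode_mono hσ.le (by omega))
  · calc eulerStep κ θ h (ynode σ Y0 h n k) ≤ ynode σ Y0 h n k + κ * θ * h :=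
          eulerStep_le_add hκ.le hs.pos.le ynode_nonneg
      _ ≤ Y0 := by linarith [hs.add_mul_lt_Y0]
      _ ≤ ynode σ Y0 h (n + 1) (n + 1) := Y0_le_ynode hσ.le hY0.le (by omega)

lemma kuF_kdF_of_thetaLow_le_of_le_thetaHigh (hκ : 0 < κ) (hθ : 0 < θ) (hσ : 0 < σ)
    (hs : SmallStep κ θ σ Y0 h) (hkn : k ≤ n)
    (hlo : thetaLow κ θ σ * h ≤ ynode σ Y0 h n k) (hhi : ynode σ Y0 h n k ≤ thetaHigh κ σ / h) :
    kuF κ θ σ Y0 h n k = k + 1 ∧ kdF κ θ σ Y0 h n k = k ∧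
      ynode σ Y0 h (n + 1) (kuF κ θ σ Y0 h n k)
        = ynode σ Y0 h n k + σ ^ 2 / 4 * h + σ * √(ynode σ Y0 h n k * h) ∧
      ynode σ Y0 h (n + 1) (kdF κ θ σ Y0 h n k)
        = ynode σ Y0 h n k + σ ^ 2 / 4 * h - σ * √(ynode σ Y0 h n k * h) := by
  have hku := kuF_eq_succ hkn (eulerStep_le_ynode_succ_succ hκ hθ hσ hs.pos hlo)
  have hkd := kdF_eq_self (ynode_succ_self_le_eulerStep hκ hθ hσ hs hhi)
  have hy₀ : σ ^ 2 / 4 * h ≤ ynode σ Y0 h n k :=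
    le_trans (by unfold thetaLow; nlinarith [mul_nonneg (sq_nonneg (κ * θ / σ)) hs.pos.le]) hlo
  refine ⟨hku, hkd, ?_, ?_⟩
  · rw [hku]
    exact ynode_succ_succ hσ.le hs.pos.le (lt_of_lt_of_le (by have := hs.pos; positivity) hy₀)
  · rw [hkd]
    exact ynode_succ_self hσ hs.pos hy₀

lemma kdF_eq_and_ynode_kuF_sub_le_of_lt_thetaLow (hκ : 0 < κ) (hθ : 0 < θ) (hσ : 0 < σ)
    (hY0 : 0 < Y0) (hs : SmallStep κ θ σ Y0 h) (hkn : k ≤ n)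
    (hlo : ynode σ Y0 h n k < thetaLow κ θ σ * h) :
    kdF κ θ σ Y0 h n k = k ∧
      0 ≤ ynode σ Y0 h (n + 1) (kuF κ θ σ Y0 h n k) - ynode σ Y0 h n k ∧
      ynode σ Y0 h (n + 1) (kuF κ θ σ Y0 h n k) - ynode σ Y0 h n k ≤ cStar κ θ σ * h := by
  set y := ynode σ Y0 h n k
  set v := eulerStep κ θ h y
  have hh := hs.pos
  have hyθ : y ≤ θ := by linarith [hs.thetaLow_mul_lt]
  have hhi : y ≤ thetaHigh κ σ / h := by
    rw [le_div_iff₀ hh]; nlinarith [hs.add_mul_lt_thetaHigh]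
  have hu := exists_eulerStep_le_ynode_succ hκ hθ hσ hY0 hs hkn
  have hyv : y ≤ v := le_eulerStep hκ.le hh.le hyθ
  have hv0 : 0 ≤ v := hyv.trans' ynode_nonneg
  have hvy : v ≤ y + κ * θ * h := eulerStep_le_add hκ.le hh.le ynode_nonneg
  have hsqrt : √v ≤ √(thetaLow κ θ σ + κ * θ) * √h := by
    rw [← Real.sqrt_mul (by linarith [thetaLow_pos hκ hθ hσ, mul_pos hκ hθ])]
    exact Real.sqrt_le_sqrt (by linarith)
  refine ⟨kdF_eq_self (ynode_succ_self_le_eulerStep hκ hθ hσ hs hhi),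
    by linarith [(kuF_spec hu).2], ?_⟩
  calc ynode σ Y0 h (n + 1) (kuF κ θ σ Y0 h n k) - y ≤ (√v + σ * √h) ^ 2 - y := by
        linarith [ynode_kuF_le hσ.le hu hyv]
    _ = (v - y) + 2 * σ * √h * √v + σ ^ 2 * h := by
        rw [add_sq, mul_pow, Real.sq_sqrt hv0, Real.sq_sqrt hh.le]; ring
    _ ≤ κ * θ * h + 2 * σ * √h * (√(thetaLow κ θ σ + κ * θ) * √h) + σ ^ 2 * h := by
        gcongr; linarith
    _ = cStar κ θ σ * h := by
        unfold cStar
        linear_combination (2 * σ * √(thetaLow κ θ σ + κ * θ)) * Real.sq_sqrt hh.le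

lemma kuF_eq_succ_of_thetaHigh_lt (hκ : 0 < κ) (hσ : 0 < σ) (hY0 : 0 < Y0)
    (hs : SmallStep κ θ σ Y0 h) (hkn : k ≤ n) (hhi : thetaHigh κ σ / h < ynode σ Y0 h n k) :
    kuF κ θ σ Y0 h n k = k + 1 := by
  have hθy : θ ≤ ynode σ Y0 h n k := by
    have : θ < thetaHigh κ σ / h := by
      rw [lt_div_iff₀ hs.pos]; nlinarith [hs.add_mul_lt_thetaHigh, mul_pos hY0 hs.pos]
    linarith
  exact kuF_eq_succ hkn
    ((eulerStep_le_self hκ.le hs.pos.le hθy).trans (ynode_le_ynode_succ_succ hσ.le))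

lemma ynode_kdF_lt_ynode_kuF (hκ : 0 < κ) (hθ : 0 < θ) (hσ : 0 < σ) (hY0 : 0 < Y0)
    (hs : SmallStep κ θ σ Y0 h) (hkn : k ≤ n) :
    ynode σ Y0 h (n + 1) (kdF κ θ σ Y0 h n k) < ynode σ Y0 h (n + 1) (kuF κ θ σ Y0 h n k) := by
  obtain ⟨hku, hv⟩ := kuF_spec (exists_eulerStep_le_ynode_succ hκ hθ hσ hY0 hs hkn)
  exact ynode_lt_ynode hσ hs.pos (kdF_le_self.trans_lt hku)
    ((eulerStep_ynode_pos hκ hθ hs).trans_le hv)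

lemma puF_pdF_eq_of_le_of_le
    (hd : ynode σ Y0 h (n + 1) (kdF κ θ σ Y0 h n k) ≤ eulerStep κ θ h (ynode σ Y0 h n k))
    (hu : eulerStep κ θ h (ynode σ Y0 h n k) ≤ ynode σ Y0 h (n + 1) (kuF κ θ σ Y0 h n k))
    (hlt : ynode σ Y0 h (n + 1) (kdF κ θ σ Y0 h n k)
      < ynode σ Y0 h (n + 1) (kuF κ θ σ Y0 h n k)) :
    0 ≤ (κ * (θ - ynode σ Y0 h n k) * h + ynode σ Y0 h n k
          - ynode σ Y0 h (n + 1) (kdF κ θ σ Y0 h n k)) /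
        (ynode σ Y0 h (n + 1) (kuF κ θ σ Y0 h n k) - ynode σ Y0 h (n + 1) (kdF κ θ σ Y0 h n k)) ∧
      (κ * (θ - ynode σ Y0 h n k) * h + ynode σ Y0 h n k
          - ynode σ Y0 h (n + 1) (kdF κ θ σ Y0 h n k)) /
        (ynode σ Y0 h (n + 1) (kuF κ θ σ Y0 h n k)
          - ynode σ Y0 h (n + 1) (kdF κ θ σ Y0 h n k)) ≤ 1 ∧
      puF κ θ σ Y0 h n k
        = (κ * (θ - ynode σ Y0 h n k) * h + ynode σ Y0 h n k
            - ynode σ Y0 h (n + 1) (kdF κ θ σ Y0 h n k)) /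
          (ynode σ Y0 h (n + 1) (kuF κ θ σ Y0 h n k)
            - ynode σ Y0 h (n + 1) (kdF κ θ σ Y0 h n k)) ∧
      pdF κ θ σ Y0 h n k
        = (ynode σ Y0 h (n + 1) (kuF κ θ σ Y0 h n k) - ynode σ Y0 h n k
            - κ * (θ - ynode σ Y0 h n k) * h) /
          (ynode σ Y0 h (n + 1) (kuF κ θ σ Y0 h n k)
            - ynode σ Y0 h (n + 1) (kdF κ θ σ Y0 h n k)) := by
  unfold eulerStep at hd hu
  have hpu_def := puF.eq_1 κ θ σ Y0 h n k
  set y := ynode σ Y0 h n k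
  set yu := ynode σ Y0 h (n + 1) (kuF κ θ σ Y0 h n k)
  set yd := ynode σ Y0 h (n + 1) (kdF κ θ σ Y0 h n k)
  have hden := sub_pos.2 hlt
  have h0 : 0 ≤ (κ * (θ - y) * h + y - yd) / (yu - yd) := div_nonneg (by linarith) hden.le
  have h1 : (κ * (θ - y) * h + y - yd) / (yu - yd) ≤ 1 := (div_le_one₀ hden).2 (by linarith)
  have hpu : puF κ θ σ Y0 h n k = (κ * (θ - y) * h + y - yd) / (yu - yd) := by
    rw [hpu_def, min_eq_right h1, max_eq_right h0]
  refine ⟨h0, h1, hpu, ?_⟩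
  rw [pdF, hpu]
  field_simp
  ring

end SmallStep

theorem stmt_11 (κ θ σ Y0 T : ℝ)
    (hκ : 0 < κ) (hθ : 0 < θ) (hσ : 0 < σ) (hY0 : 0 < Y0) (hT : 0 < T) :
    ∃ θlow θhigh Cstar hbar : ℝ,
      0 < θlow ∧ 0 < θhigh ∧ 0 < Cstar ∧ 0 < hbar ∧
      ∀ N : ℕ, 1 ≤ N → T / N < hbar → ∀ n k : ℕ, k ≤ n → n + 1 ≤ N →
        ∀ hstep y yu yd : ℝ, hstep = T / N → y = ynode σ Y0 hstep n k →
          yu = ynode σ Y0 hstep (n + 1) (kuF κ θ σ Y0 hstep n k) →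
          yd = ynode σ Y0 hstep (n + 1) (kdF κ θ σ Y0 hstep n k) →
          (θlow * hstep ≤ y → y ≤ θhigh / hstep →
            kuF κ θ σ Y0 hstep n k = k + 1 ∧ kdF κ θ σ Y0 hstep n k = k ∧
            yu = y + σ ^ 2 / 4 * hstep + σ * Real.sqrt (y * hstep) ∧
            yd = y + σ ^ 2 / 4 * hstep - σ * Real.sqrt (y * hstep)) ∧
          (y < θlow * hstep →
            kdF κ θ σ Y0 hstep n k = k ∧ 0 ≤ yu - y ∧ yu - y ≤ Cstar * hstep) ∧
          (θhigh / hstep < y → kuF κ θ σ Y0 hstep n k = k + 1) ∧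
          (yd < yu ∧
            0 ≤ (κ * (θ - y) * hstep + y - yd) / (yu - yd) ∧
            (κ * (θ - y) * hstep + y - yd) / (yu - yd) ≤ 1 ∧
            puF κ θ σ Y0 hstep n k = (κ * (θ - y) * hstep + y - yd) / (yu - yd) ∧
            pdF κ θ σ Y0 hstep n k = (yu - y - κ * (θ - y) * hstep) / (yu - yd)) := by
  refine ⟨thetaLow κ θ σ, thetaHigh κ σ, cStar κ θ σ, hBar κ θ σ Y0, thetaLow_pos hκ hθ hσ,
    by unfold thetaHigh; positivity, by unfold cStar; positivity, hBar_pos hκ hθ hσ hY0, ?_⟩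
  rintro N hN hlt n k hkn - h y yu yd rfl rfl rfl rfl
  have hs := smallStep_of_lt_hBar hκ hθ hσ hY0 (by positivity) hlt
  refine ⟨kuF_kdF_of_thetaLow_le_of_le_thetaHigh hκ hθ hσ hs hkn,
    kdF_eq_and_ynode_kuF_sub_le_of_lt_thetaLow hκ hθ hσ hY0 hs hkn,
    kuF_eq_succ_of_thetaHigh_lt hκ hσ hY0 hs hkn,
    ynode_kdF_lt_ynode_kuF hκ hθ hσ hY0 hs hkn,
    puF_pdF_eq_of_le_of_le
      (ynode_kdF_le (exists_ynode_succ_le_eulerStep hκ hθ hσ hY0 hs))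
      (kuF_spec (exists_eulerStep_le_ynode_succ hκ hθ hσ hY0 hs hkn)).2
      (ynode_kdF_lt_ynode_kuF hκ hθ hσ hY0 hs hkn)⟩
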